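/- The extended And-Or path split (3): for 0 ≤ i ≤ j ≤ k < m with j - i even and 1 ≤ λ ≤ (k-j)/2, φ_{i,j,k} = φ_{i,j,j+2λ-1} ∨ φ_{i,j+2λ,k}, where φ_{i,j,k} := t_i ∧ t_{i+2} ∧ ... ∧ t_{j-2} ∧ g(t_j,...,t_k). -/

import Mathlib

mutual
  /-- And-Or path starting with AND: `gA [t₀,…,t_{m-1}] = t₀ ∧ (t₁ ∨ (t₂ ∧ …))`. -/
  def gA : List Bool → Bool
    | [] => false
    | t :: r => t && gO r
  /-- Dual And-Or path starting with OR: `gO [t₀,…] = t₀ ∨ (t₁ ∧ …)`. -/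
  def gO : List Bool → Bool
    | [] => true
    | t :: r => t || gA r
end

/-- Extended And-Or path `φ_{i,j,k} = t_i ∧ t_{i+2} ∧ … ∧ t_{j-2} ∧ g(t_j,…,t_k)`. -/
def phi (t : ℕ → Bool) (i j k : ℕ) : Bool :=
  (((List.range' i ((j - i) / 2) 2).map t).all id) &&
    gA ((List.range' j (k + 1 - j)).map t)

/-- Dual extended And-Or path `φ*_{i,j,k} = t_i ∨ t_{i+2} ∨ … ∨ t_{j-2} ∨ g*(t_j,…,t_k)`. -/
def phiStar (t : ℕ → Bool) (i j k : ℕ) : Bool :=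
  (((List.range' i ((j - i) / 2) 2).map t).any id) ||
    gO ((List.range' j (k + 1 - j)).map t)

/- After an even number of inputs the rest of the path is again an `∧`-headed path. -/
theorem gA_range'_append (t : ℕ → Bool) (r : List Bool) :
    ∀ n j : ℕ, gA ((List.range' j (2 * n)).map t ++ r) =
      (gA ((List.range' j (2 * n)).map t) || ((List.range' j n 2).map t).all id && gA r)
  | 0, j => by simp [gA]
  | n + 1, j => by
    rw [show 2 * (n + 1) = 2 * n + 1 + 1 by ring, List.range'_succ, List.range'_succ,
      List.range'_succ, show j + 1 + 1 = j + 2 by ring]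
    simp only [List.map_cons, List.cons_append, gA, gO, List.all_cons, id,
      gA_range'_append t r n (j + 2)]
    cases t j <;> cases t (j + 1) <;> simp

theorem phi_eq_of_eq_add (t : ℕ → Bool) {i j c : ℕ} (k : ℕ) (h : j = i + 2 * c) :
    phi t i j k = (((List.range' i c 2).map t).all id && gA ((List.range' j (k + 1 - j)).map t)) := by
  rw [phi, show (j - i) / 2 = c by omega]

/-- Split (3): for `i ≤ j ≤ k < m`, `j - i` even and `1 ≤ λ ≤ (k-j)/2`,
`φ_{i,j,k} = φ_{i,j,j+2λ-1} ∨ φ_{i,j+2λ,k}`. -/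
theorem phi_split_or (m i j k lam : ℕ) (t : ℕ → Bool)
    (hij : i ≤ j) (hjk : j ≤ k) (hkm : k < m) (heven : Even (j - i))
    (hlam1 : 1 ≤ lam) (hlam2 : 2 * lam ≤ k - j) :
    phi t i j k = (phi t i j (j + 2 * lam - 1) || phi t i (j + 2 * lam) k) := by
  obtain ⟨c, hc⟩ := heven
  have hj : j = i + 2 * c := by omega
  obtain ⟨n, hn⟩ : ∃ n, k + 1 - j = 2 * lam + n := ⟨k + 1 - (j + 2 * lam), by omega⟩
  rw [phi_eq_of_eq_add t k hj, phi_eq_of_eq_add t _ hj,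
    phi_eq_of_eq_add t k (show j + 2 * lam = i + 2 * (c + lam) by omega),
    show j + 2 * lam - 1 + 1 - j = 2 * lam by omega, show k + 1 - (j + 2 * lam) = n by omega, hn,
    ← List.range'_append, ← List.range'_append, List.map_append, List.map_append,
    gA_range'_append, List.all_append, ← hj, one_mul]
  simp only [Bool.and_or_distrib_left, Bool.and_assoc]
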